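/- arXiv:2003.09251 — 3 statements merged into one kernel-verified Lean document; each statement's English description precedes it below -/
import Mathlib

section
/- Assume that for each j = 1,…,N: (a) (D_j R_j A V, W^j) = (D_j B_j R_j V, W^j) for all V ∈ ℂ^n and all W^j ∈ ℂ^{n_j}; (b) there exists Λ₀ > 0 such that ‖Σ_{j=1}^N R_jᵀ W^j‖_Ω² ≤ Λ₀ Σ_{j=1}^N ‖W^j‖_{Ω_j}² for all choices of W^j ∈ ℂ^{n_j}; (c) there exists Λ₁ > 0 such that Σ_{j=1}^N ‖R_j V‖_{Ω_j}² ≤ Λ₁ ‖V‖_Ω² for all V ∈ ℂ^n; (d) there exists C_{D,j} > 0 with ‖D_j W^j‖_{Ω_j} ≤ C_{D,j} ‖W^j‖_{Ω_j} for all W^j ∈ ℂ^{n_j}; (e) there exists C_{DB,j} > 0 with |([D_j, B_j] V^j, W^j)| ≤ C_{DB,j} ‖V^j‖_{Ω_j} ‖W^j‖_{Ω_j} for all V^j, W^j ∈ ℂ^{n_j}; (f) there exists C_{stab,j} > 0 such that ‖U^j‖_{Ω_j} ≤ C_{stab,j} · max_{W^j ∈ ℂ^{n_j}, W^j ≠ 0}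 |(B_j U^j, W^j)| / ‖W^j‖_{Ω_j} for all U^j ∈ ℂ^{n_j}. Then for every nonzero V ∈ ℂ^n, ‖M⁻¹ A V‖_Ω / ‖V‖_Ω ≤ √(Λ₀ Λ₁) · max_{j=1,…,N} { C_{D,j} (C_{stab,j} C_{DB,j} + C_{D,j}) }. -/
open Matrix
open scoped ComplexOrder

/-!
On subdomain `j` write `x = R_j V`. Hypothesis (a) gives `D_j R_j A V = D_j B_j x`, so the local
contribution is `D_j B_j⁻¹ D_j B_j x`, and commuting `D_j` past `B_j`,
`B_j⁻¹ D_j B_j x = D_j x + B_j⁻¹ [D_j, B_j] x`.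
The inf-sup stability (f) together with the commutator bound (e) controls the second term by
`C_stab C_DB ‖x‖`, and (d) controls the first by `C_D ‖x‖`, so the local contribution is bounded
by `C_D (C_stab C_DB + C_D) ‖R_j V‖`. The stable splitting (b) and the finite overlap bound (c)
then assemble these local bounds into the global one.
-/

/-- Hermitian inner product `(V, W) = W* V`. -/
noncomputable def iprod {m : ℕ} (V W : Fin m → ℂ) : ℂ := star W ⬝ᵥ V

/-- Weighted norm `‖V‖_F = ((F V, V))^{1/2}` for a Hermitian positive definite `F`. -/
noncomputable def wnorm {m : ℕ} (F : Matrix (Fin m) (Fin m) ℂ) (V : Fin m → ℂ) : ℝ :=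
  Real.sqrt (iprod (F.mulVec V) V).re

section WeightedNorm

variable {m : ℕ} {F : Matrix (Fin m) (Fin m) ℂ}

lemma wnorm_nonneg (F : Matrix (Fin m) (Fin m) ℂ) (x : Fin m → ℂ) : 0 ≤ wnorm F x :=
  Real.sqrt_nonneg _

lemma wnorm_eq_norm (hF : F.PosDef) (x : Fin m → ℂ) :
    wnorm F x = @norm _ (Matrix.toNormedAddCommGroup F hF).toNorm x := by
  unfold wnorm iprod
  rw [dotProduct_comm]
  rfl

lemma wnorm_pos (hF : F.PosDef) {x : Fin m → ℂ} (hx : x ≠ 0) : 0 < wnorm F x := by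
  rw [wnorm_eq_norm hF]
  exact (@norm_pos_iff _ (Matrix.toNormedAddCommGroup F hF).toNormedAddGroup x).mpr hx

lemma wnorm_add_le (hF : F.PosDef) (x y : Fin m → ℂ) :
    wnorm F (x + y) ≤ wnorm F x + wnorm F y := by
  simp only [wnorm_eq_norm hF]
  exact @norm_add_le _
    (@NormedAddGroup.toSeminormedAddGroup _ (Matrix.toNormedAddCommGroup F hF).toNormedAddGroup) x y

lemma eq_of_forall_iprod_eq {x y : Fin m → ℂ} (h : ∀ W, iprod x W = iprod y W) : x = y := by
  have hxy : iprod (x - y) (x - y) = 0 := by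
    rw [iprod, dotProduct_sub, ← iprod, ← iprod, h, sub_self]
  exact sub_eq_zero.mp (dotProduct_star_self_eq_zero.mp hxy)

lemma wnorm_nonsing_inv_mulVec_le {B : Matrix (Fin m) (Fin m) ℂ} (hF : F.PosDef) (hB : IsUnit B)
    {C c : ℝ} (hC : 0 ≤ C) (hc : 0 ≤ c)
    (hstab : ∀ U, wnorm F U ≤ C * ⨆ W : {W : Fin m → ℂ // W ≠ 0},
      ‖iprod (B *ᵥ U) W.1‖ / wnorm F W.1)
    {y : Fin m → ℂ} (hy : ∀ W, ‖iprod y W‖ ≤ c * wnorm F W) :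
    wnorm F (B⁻¹ *ᵥ y) ≤ C * c := by
  have hBB : B *ᵥ (B⁻¹ *ᵥ y) = y := by
    rw [mulVec_mulVec, mul_nonsing_inv _ ((isUnit_iff_isUnit_det B).mp hB), one_mulVec]
  refine (hstab _).trans (mul_le_mul_of_nonneg_left (Real.iSup_le (fun W => ?_) hc) hC)
  rw [hBB, div_le_iff₀ (wnorm_pos hF W.2)]
  exact hy W.1

end WeightedNorm

lemma nonsing_inv_mul_mul_eq_add_commutator {ι α : Type*} [Fintype ι] [DecidableEq ι]
    [CommRing α] {B : Matrix ι ι α} (hB : IsUnit B) (D : Matrix ι ι α) :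
    B⁻¹ * D * B = D + B⁻¹ * (D * B - B * D) := by
  rw [mul_sub, nonsing_inv_mul_cancel_left _ _ ((isUnit_iff_isUnit_det B).mp hB),
    Matrix.mul_assoc]
  abel

lemma wnorm_mulVec_conj_le {m : ℕ} {F B D : Matrix (Fin m) (Fin m) ℂ}
    (hF : F.PosDef) (hB : IsUnit B) {CD CDB Cstab : ℝ}
    (hCD : 0 ≤ CD) (hCDB : 0 ≤ CDB) (hCstab : 0 ≤ Cstab)
    (hd : ∀ W, wnorm F (D *ᵥ W) ≤ CD * wnorm F W)
    (he : ∀ V W, ‖iprod ((D * B - B * D) *ᵥ V) W‖ ≤ CDB * wnorm F V * wnorm F W)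
    (hstab : ∀ U, wnorm F U ≤ Cstab * ⨆ W : {W : Fin m → ℂ // W ≠ 0},
      ‖iprod (B *ᵥ U) W.1‖ / wnorm F W.1)
    (x : Fin m → ℂ) :
    wnorm F (D *ᵥ (B⁻¹ *ᵥ (D *ᵥ (B *ᵥ x)))) ≤ CD * (Cstab * CDB + CD) * wnorm F x := by
  have hcomm : wnorm F (B⁻¹ *ᵥ ((D * B - B * D) *ᵥ x)) ≤ Cstab * (CDB * wnorm F x) :=
    wnorm_nonsing_inv_mulVec_le hF hB hCstab (mul_nonneg hCDB (wnorm_nonneg F x)) hstab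
      (he x)
  calc wnorm F (D *ᵥ (B⁻¹ *ᵥ (D *ᵥ (B *ᵥ x))))
      ≤ CD * wnorm F (B⁻¹ *ᵥ (D *ᵥ (B *ᵥ x))) := hd _
    _ = CD * wnorm F (D *ᵥ x + B⁻¹ *ᵥ ((D * B - B * D) *ᵥ x)) := by
      rw [mulVec_mulVec, mulVec_mulVec, nonsing_inv_mul_mul_eq_add_commutator hB, add_mulVec,
        mulVec_mulVec]
    _ ≤ CD * (CD * wnorm F x + Cstab * (CDB * wnorm F x)) := by
      gcongr
      exact (wnorm_add_le hF _ _).trans (add_le_add (hd x) hcomm)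
    _ = CD * (Cstab * CDB + CD) * wnorm F x := by ring

lemma wnorm_sum_transpose_mulVec_le {n N : ℕ} {nj : Fin N → ℕ}
    {R : ∀ j : Fin N, Matrix (Fin (nj j)) (Fin n) ℂ} {FΩ : Matrix (Fin n) (Fin n) ℂ}
    {FF : ∀ j : Fin N, Matrix (Fin (nj j)) (Fin (nj j)) ℂ} {Λ0 Λ1 K : ℝ}
    (hΛ0 : 0 ≤ Λ0) (hK : 0 ≤ K)
    (hb : ∀ W : (j : Fin N) → Fin (nj j) → ℂ,
      wnorm FΩ (∑ j, (R j)ᵀ *ᵥ W j) ^ 2 ≤ Λ0 * ∑ j, wnorm (FF j) (W j) ^ 2)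
    (hc : ∀ V : Fin n → ℂ, ∑ j, wnorm (FF j) (R j *ᵥ V) ^ 2 ≤ Λ1 * wnorm FΩ V ^ 2)
    (V : Fin n → ℂ) (W : (j : Fin N) → Fin (nj j) → ℂ)
    (hW : ∀ j, wnorm (FF j) (W j) ≤ K * wnorm (FF j) (R j *ᵥ V)) :
    wnorm FΩ (∑ j, (R j)ᵀ *ᵥ W j) ≤ √(Λ0 * Λ1) * K * wnorm FΩ V := by
  have hsq : wnorm FΩ (∑ j, (R j)ᵀ *ᵥ W j) ^ 2 ≤ Λ0 * Λ1 * (K * wnorm FΩ V) ^ 2 :=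
    calc wnorm FΩ (∑ j, (R j)ᵀ *ᵥ W j) ^ 2
        ≤ Λ0 * ∑ j, wnorm (FF j) (W j) ^ 2 := hb W
      _ ≤ Λ0 * (K ^ 2 * ∑ j, wnorm (FF j) (R j *ᵥ V) ^ 2) := by
        gcongr Λ0 * ?_
        rw [Finset.mul_sum]
        refine Finset.sum_le_sum fun j _ => ?_
        rw [← mul_pow]
        exact pow_le_pow_left₀ (wnorm_nonneg _ _) (hW j) 2
      _ ≤ Λ0 * (K ^ 2 * (Λ1 * wnorm FΩ V ^ 2)) := by gcongr; exact hc V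
      _ = Λ0 * Λ1 * (K * wnorm FΩ V) ^ 2 := by ring
  calc wnorm FΩ (∑ j, (R j)ᵀ *ᵥ W j)
      = √(wnorm FΩ (∑ j, (R j)ᵀ *ᵥ W j) ^ 2) := (Real.sqrt_sq (wnorm_nonneg _ _)).symm
    _ ≤ √(Λ0 * Λ1 * (K * wnorm FΩ V) ^ 2) := Real.sqrt_le_sqrt hsq
    _ = √(Λ0 * Λ1) * K * wnorm FΩ V := by
      rw [Real.sqrt_mul' _ (sq_nonneg _), Real.sqrt_sq (mul_nonneg hK (wnorm_nonneg _ _)),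
        mul_assoc]

theorem stmt0_general (n N : ℕ) (hN : 0 < N)
    (nj : Fin N → ℕ)
    (A : Matrix (Fin n) (Fin n) ℂ)
    (R : ∀ j : Fin N, Matrix (Fin (nj j)) (Fin n) ℂ)
    (D : ∀ j : Fin N, Matrix (Fin (nj j)) (Fin (nj j)) ℂ)
    (B : ∀ j : Fin N, Matrix (Fin (nj j)) (Fin (nj j)) ℂ)
    (FΩ : Matrix (Fin n) (Fin n) ℂ)
    (FF : ∀ j : Fin N, Matrix (Fin (nj j)) (Fin (nj j)) ℂ)
    (hB : ∀ j, IsUnit (B j))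
    (hFF : ∀ j, (FF j).PosDef)
    (Λ0 Λ1 : ℝ) (hΛ0 : 0 < Λ0)
    (CD CDB Cstab : Fin N → ℝ)
    (hCD : ∀ j, 0 < CD j) (hCDB : ∀ j, 0 < CDB j) (hCstab : ∀ j, 0 < Cstab j)
    -- (a)
    (ha : ∀ (j : Fin N) (V : Fin n → ℂ) (W : Fin (nj j) → ℂ),
      iprod ((D j).mulVec ((R j).mulVec (A.mulVec V))) W
        = iprod ((D j).mulVec ((B j).mulVec ((R j).mulVec V))) W)
    -- (b)
    (hb : ∀ W : (j : Fin N) → Fin (nj j) → ℂ,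
      wnorm FΩ (∑ j, (R j)ᵀ.mulVec (W j)) ^ 2 ≤ Λ0 * ∑ j, wnorm (FF j) (W j) ^ 2)
    -- (c)
    (hc : ∀ V : Fin n → ℂ,
      ∑ j, wnorm (FF j) ((R j).mulVec V) ^ 2 ≤ Λ1 * wnorm FΩ V ^ 2)
    -- (d)
    (hd : ∀ (j : Fin N) (W : Fin (nj j) → ℂ),
      wnorm (FF j) ((D j).mulVec W) ≤ CD j * wnorm (FF j) W)
    -- (e)
    (he : ∀ (j : Fin N) (V W : Fin (nj j) → ℂ),
      ‖iprod ((D j * B j - B j * D j).mulVec V) W‖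
        ≤ CDB j * wnorm (FF j) V * wnorm (FF j) W)
    -- (f)
    (hf : ∀ (j : Fin N) (U : Fin (nj j) → ℂ),
      wnorm (FF j) U ≤ Cstab j * ⨆ W : {W : Fin (nj j) → ℂ // W ≠ 0},
        ‖iprod ((B j).mulVec U) W.1‖ / wnorm (FF j) W.1) :
    ∀ V : Fin n → ℂ, V ≠ 0 →
      wnorm FΩ ((∑ j, (R j)ᵀ * D j * (B j)⁻¹ * D j * R j).mulVec (A.mulVec V)) / wnorm FΩ V
        ≤ Real.sqrt (Λ0 * Λ1) *
            Finset.univ.sup' ⟨⟨0, hN⟩, Finset.mem_univ _⟩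
              (fun j => CD j * (Cstab j * CDB j + CD j)) := by
  intro V _
  set c : Fin N → ℝ := fun j => CD j * (Cstab j * CDB j + CD j)
  set K := Finset.univ.sup' ⟨⟨0, hN⟩, Finset.mem_univ _⟩ c
  have hcK : ∀ j, c j ≤ K := fun j => Finset.le_sup' c (Finset.mem_univ j)
  have hK : 0 ≤ K := by
    let j₀ : Fin N := ⟨0, hN⟩
    refine le_trans ?_ (hcK j₀)
    exact mul_nonneg (hCD j₀).le
      (add_nonneg (mul_nonneg (hCstab j₀).le (hCDB j₀).le) (hCD j₀).le)
  have hlocal : ∀ j, wnorm (FF j) (D j *ᵥ ((B j)⁻¹ *ᵥ (D j *ᵥ (R j *ᵥ (A *ᵥ V)))))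
      ≤ K * wnorm (FF j) (R j *ᵥ V) := fun j => by
    rw [eq_of_forall_iprod_eq (ha j V)]
    exact (wnorm_mulVec_conj_le (hFF j) (hB j) (hCD j).le (hCDB j).le (hCstab j).le (hd j)
      (he j) (hf j) _).trans (by gcongr; exacts [wnorm_nonneg _ _, hcK j])
  have hM : (∑ j, (R j)ᵀ * D j * (B j)⁻¹ * D j * R j) *ᵥ (A *ᵥ V)
      = ∑ j, (R j)ᵀ *ᵥ (D j *ᵥ ((B j)⁻¹ *ᵥ (D j *ᵥ (R j *ᵥ (A *ᵥ V))))) := by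
    rw [sum_mulVec]
    simp only [mulVec_mulVec, Matrix.mul_assoc]
  refine div_le_of_le_mul₀ (wnorm_nonneg _ _) (mul_nonneg (Real.sqrt_nonneg _) hK) ?_
  rw [hM]
  exact wnorm_sum_transpose_mulVec_le hΛ0.le hK hb hc V _ hlocal

/-- upper bound on the weighted norm of the SORAS-preconditioned matrix
`M⁻¹ A`, where `M⁻¹ = Σ_j R_jᵀ D_j B_j⁻¹ D_j R_j`. -/
theorem stmt0 (n N : ℕ) (hn : 1 ≤ n) (hN : 0 < N)
    (nj : Fin N → ℕ) (hnj : ∀ j, 1 ≤ nj j)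
    (A : Matrix (Fin n) (Fin n) ℂ)
    (R : ∀ j : Fin N, Matrix (Fin (nj j)) (Fin n) ℂ)
    (D : ∀ j : Fin N, Matrix (Fin (nj j)) (Fin (nj j)) ℂ)
    (B : ∀ j : Fin N, Matrix (Fin (nj j)) (Fin (nj j)) ℂ)
    (FΩ : Matrix (Fin n) (Fin n) ℂ)
    (FF : ∀ j : Fin N, Matrix (Fin (nj j)) (Fin (nj j)) ℂ)
    (hD : ∀ j, ∃ dd : Fin (nj j) → ℝ,
      (∀ i, 0 ≤ dd i) ∧ D j = Matrix.diagonal fun i => (dd i : ℂ))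
    (hB : ∀ j, IsUnit (B j))
    (hFΩ : FΩ.PosDef) (hFF : ∀ j, (FF j).PosDef)
    (Λ0 Λ1 : ℝ) (hΛ0 : 0 < Λ0) (hΛ1 : 0 < Λ1)
    (CD CDB Cstab : Fin N → ℝ)
    (hCD : ∀ j, 0 < CD j) (hCDB : ∀ j, 0 < CDB j) (hCstab : ∀ j, 0 < Cstab j)
    -- (a)
    (ha : ∀ (j : Fin N) (V : Fin n → ℂ) (W : Fin (nj j) → ℂ),
      iprod ((D j).mulVec ((R j).mulVec (A.mulVec V))) W
        = iprod ((D j).mulVec ((B j).mulVec ((R j).mulVec V))) W)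
    -- (b)
    (hb : ∀ W : (j : Fin N) → Fin (nj j) → ℂ,
      wnorm FΩ (∑ j, (R j)ᵀ.mulVec (W j)) ^ 2 ≤ Λ0 * ∑ j, wnorm (FF j) (W j) ^ 2)
    -- (c)
    (hc : ∀ V : Fin n → ℂ,
      ∑ j, wnorm (FF j) ((R j).mulVec V) ^ 2 ≤ Λ1 * wnorm FΩ V ^ 2)
    -- (d)
    (hd : ∀ (j : Fin N) (W : Fin (nj j) → ℂ),
      wnorm (FF j) ((D j).mulVec W) ≤ CD j * wnorm (FF j) W)
    -- (e)
    (he : ∀ (j : Fin N) (V W : Fin (nj j) → ℂ),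
      ‖iprod ((D j * B j - B j * D j).mulVec V) W‖
        ≤ CDB j * wnorm (FF j) V * wnorm (FF j) W)
    -- (f)
    (hf : ∀ (j : Fin N) (U : Fin (nj j) → ℂ),
      wnorm (FF j) U ≤ Cstab j * ⨆ W : {W : Fin (nj j) → ℂ // W ≠ 0},
        ‖iprod ((B j).mulVec U) W.1‖ / wnorm (FF j) W.1) :
    ∀ V : Fin n → ℂ, V ≠ 0 →
      wnorm FΩ ((∑ j, (R j)ᵀ * D j * (B j)⁻¹ * D j * R j).mulVec (A.mulVec V)) / wnorm FΩ V
        ≤ Real.sqrt (Λ0 * Λ1) *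
            Finset.univ.sup' ⟨⟨0, hN⟩, Finset.mem_univ _⟩
              (fun j => CD j * (Cstab j * CDB j + CD j)) :=
  stmt0_general n N hN nj A R D B FΩ FF hB hFF Λ0 Λ1 hΛ0 CD CDB Cstab hCD hCDB hCstab ha hb hc hd he
    hf
end

section
/- Assume the partition of unity property Σ_{j=1}^N R_jᵀ D_j R_j = I, and assume there exists Λ₀ > 0 such that ‖Σ_{j=1}^N R_jᵀ W^j‖_Ω² ≤ Λ₀ Σ_{j=1}^N ‖W^j‖_{Ω_j}² for all choices of W^j ∈ ℂ^{n_j}. Then for all V ∈ ℂ^n, Σ_{j=1}^N ‖D_j R_j V‖_{Ω_j}² ≥ (1/Λ₀) ‖V‖_Ω². -/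
open Matrix
open scoped ComplexOrder

/-- with the partition of unity `Σ_j R_jᵀ D_j R_j = I` and the stable
reconstruction estimate (b), `Σ_j ‖D_j R_j V‖_{Ω_j}² ≥ (1/Λ₀) ‖V‖_Ω²`. -/
theorem stmt5 (n N : ℕ) (hn : 1 ≤ n) (hN : 0 < N)
    (nj : Fin N → ℕ) (hnj : ∀ j, 1 ≤ nj j)
    (R : ∀ j : Fin N, Matrix (Fin (nj j)) (Fin n) ℂ)
    (D : ∀ j : Fin N, Matrix (Fin (nj j)) (Fin (nj j)) ℂ)
    (FΩ : Matrix (Fin n) (Fin n) ℂ)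
    (FF : ∀ j : Fin N, Matrix (Fin (nj j)) (Fin (nj j)) ℂ)
    (hD : ∀ j, ∃ dd : Fin (nj j) → ℝ,
      (∀ i, 0 ≤ dd i) ∧ D j = Matrix.diagonal fun i => (dd i : ℂ))
    (hFΩ : FΩ.PosDef) (hFF : ∀ j, (FF j).PosDef)
    -- partition of unity
    (hPU : ∑ j, (R j)ᵀ * D j * R j = 1)
    (Λ0 : ℝ) (hΛ0 : 0 < Λ0)
    -- (b)
    (hb : ∀ W : (j : Fin N) → Fin (nj j) → ℂ,
      wnorm FΩ (∑ j, (R j)ᵀ.mulVec (W j)) ^ 2 ≤ Λ0 * ∑ j, wnorm (FF j) (W j) ^ 2) :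
    ∀ V : Fin n → ℂ,
      (1 / Λ0) * wnorm FΩ V ^ 2
        ≤ ∑ j, wnorm (FF j) ((D j).mulVec ((R j).mulVec V)) ^ 2 := by
  intro V
  have key : (∑ j, (R j)ᵀ.mulVec ((D j).mulVec ((R j).mulVec V))) = V := by
    calc ∑ j, (R j)ᵀ *ᵥ D j *ᵥ R j *ᵥ V
        = ∑ j, ((R j)ᵀ * D j * R j) *ᵥ V := by
          simp [Matrix.mulVec_mulVec, Matrix.mul_assoc]
      _ = (∑ j, (R j)ᵀ * D j * R j) *ᵥ V := by
          ext i
          simp only [Matrix.mulVec, dotProduct, Finset.sum_apply,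
            Matrix.sum_apply, Finset.sum_mul]
          exact Finset.sum_comm .. 
      _ = V := by rw [hPU, Matrix.one_mulVec]
  have h := hb (fun j => (D j).mulVec ((R j).mulVec V))
  rw [key] at h
  rw [one_div, inv_mul_le_iff₀ hΛ0]
  linarith
end

section
/- Let Ω_j ⊆ Ω be open, let δ > 0 and C_dPU > 0, and let χ : ℝ^d → ℝ be a differentiable function with |χ(x)| ≤ 1 and |∇χ(x)| ≤ C_dPU / δ for all x ∈ Ω_j. Then for all differentiable functions v, w : ℝ^d → ℝ whose values and gradients are square-integrable on Ω_j (and such that χ v and χ w have square-integrable values and gradients on Ω_j, with all relevant products integrable), the commutator bound | (v, χ w)_{1,c,Ω_j} − (χ v, w)_{1,c,Ω_j} | ≤ C_dPU · ( ν₊ / √(c̃₋ ν₋) ) · (1/δ) · ‖v‖_{1,c,Ω_j} ‖w‖_{1,c,Ω_j} holds. -/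
open MeasureTheory
open scoped RealInnerProductSpace

/-!
By the product rule the terms `χ ⟪∇v, ∇w⟫` cancel, so the commutator is
`∫ ν (w ⟪∇v, ∇χ⟫ - v ⟪∇w, ∇χ⟫)`, which is at most `ν₊ (C_dPU / δ) (‖∇v‖ ‖w‖ + ‖v‖ ‖∇w‖)` in
`L²` norms. Cauchy–Schwarz in `ℝ²` with the weights `c̃₋, ν₋` bounds the bracket by
`‖v‖_{1,c} ‖w‖_{1,c} / √(c̃₋ ν₋)`.
-/

section Gradient

variable {F : Type*} [NormedAddCommGroup F] [InnerProductSpace ℝ F] [CompleteSpace F] {x : F}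

theorem gradient_fun_mul {f g : F → ℝ} (hf : DifferentiableAt ℝ f x)
    (hg : DifferentiableAt ℝ g x) :
    gradient (fun y => f y * g y) x = f x • gradient g x + g x • gradient f x := by
  simp only [gradient, fderiv_fun_mul hf hg, map_add, map_smul]

theorem inner_gradient_mul_sub_inner_gradient_mul {χ v w : F → ℝ}
    (hχ : DifferentiableAt ℝ χ x) (hv : DifferentiableAt ℝ v x) (hw : DifferentiableAt ℝ w x) :
    ⟪gradient v x, gradient (fun y => χ y * w y) x⟫
        - ⟪gradient (fun y => χ y * v y) x, gradient w x⟫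
      = w x * ⟪gradient v x, gradient χ x⟫ - v x * ⟪gradient w x, gradient χ x⟫ := by
  rw [gradient_fun_mul hχ hw, gradient_fun_mul hχ hv, inner_add_right, inner_add_left,
    real_inner_smul_right, real_inner_smul_right, real_inner_smul_left, real_inner_smul_left,
    real_inner_comm (gradient χ x) (gradient w x)]
  ring

end Gradient

theorem abs_mul_inner_sub_mul_inner_le {E : Type*} [NormedAddCommGroup E]
    [InnerProductSpace ℝ E] (a b : ℝ) (p q r : E) {L : ℝ} (hr : ‖r‖ ≤ L) :
    |b * ⟪p, r⟫ - a * ⟪q, r⟫| ≤ L * (‖p‖ * |b| + |a| * ‖q‖) :=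
  calc |b * ⟪p, r⟫ - a * ⟪q, r⟫| ≤ |b| * (‖p‖ * ‖r‖) + |a| * (‖q‖ * ‖r‖) := by
        refine (abs_sub _ _).trans (add_le_add ?_ ?_) <;> rw [abs_mul] <;> gcongr <;>
          exact abs_real_inner_le_norm _ _
    _ ≤ |b| * (‖p‖ * L) + |a| * (‖q‖ * L) := by gcongr
    _ = L * (‖p‖ * |b| + |a| * ‖q‖) := by ring

theorem sqrt_mul_mul_add_mul_le (c n a₁ a₂ b₁ b₂ : ℝ) (hc : 0 ≤ c) (hn : 0 ≤ n) :
    √(c * n) * (a₂ * b₁ + a₁ * b₂) ≤ √(c * a₁ ^ 2 + n * a₂ ^ 2) * √(c * b₁ ^ 2 + n * b₂ ^ 2) := by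
  rw [← Real.sqrt_mul (by positivity)]
  apply Real.le_sqrt_of_sq_le
  rw [mul_pow, Real.sq_sqrt (mul_nonneg hc hn)]
  -- the gap between the two sides is `(c a₁ b₁ - n a₂ b₂) ^ 2`
  nlinarith [sq_nonneg (c * a₁ * b₁ - n * a₂ * b₂)]

section Energy

variable {α : Type*} [MeasurableSpace α] {μ : Measure α} {E : Type*} [NormedAddCommGroup E]

theorem integral_norm_mul_norm_le_sqrt_mul_sqrt {F : Type*} [NormedAddCommGroup F]
    {f : α → E} {g : α → F} (hf : MemLp f 2 μ) (hg : MemLp g 2 μ) :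
    ∫ x, ‖f x‖ * ‖g x‖ ∂μ ≤ √(∫ x, ‖f x‖ ^ 2 ∂μ) * √(∫ x, ‖g x‖ ^ 2 ∂μ) := by
  have h := integral_mul_norm_le_Lp_mul_Lq (μ := μ) (f := fun x => ‖f x‖)
    (g := fun x => ‖g x‖) Real.HolderConjugate.two_two (by simpa using hf.norm)
    (by simpa using hg.norm)
  simpa [Real.sqrt_eq_rpow] using h

theorem integrable_weighted_energy {c ν v : α → ℝ} {g : α → E} {chi νhi : ℝ}
    (hcm : AEStronglyMeasurable c μ) (hνm : AEStronglyMeasurable ν μ)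
    (hc : ∀ᵐ x ∂μ, ‖c x‖ ≤ chi) (hν : ∀ᵐ x ∂μ, ‖ν x‖ ≤ νhi)
    (hv : MemLp v 2 μ) (hg : MemLp g 2 μ) :
    Integrable (fun x => c x * v x ^ 2 + ν x * ‖g x‖ ^ 2) μ :=
  (hv.integrable_sq.bdd_mul hcm hc).add (hg.integrable_norm_pow two_ne_zero |>.bdd_mul hνm hν)

theorem mul_integral_sq_add_mul_integral_sq_le {c ν v : α → ℝ} {g : α → E} {clo νlo : ℝ}
    (hc : ∀ᵐ x ∂μ, clo ≤ c x) (hν : ∀ᵐ x ∂μ, νlo ≤ ν x) (hv : MemLp v 2 μ) (hg : MemLp g 2 μ)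
    (hint : Integrable (fun x => c x * v x ^ 2 + ν x * ‖g x‖ ^ 2) μ) :
    clo * ∫ x, v x ^ 2 ∂μ + νlo * ∫ x, ‖g x‖ ^ 2 ∂μ
      ≤ ∫ x, (c x * v x ^ 2 + ν x * ‖g x‖ ^ 2) ∂μ := by
  have hv2 := hv.integrable_sq.const_mul clo
  have hg2 := (hg.integrable_norm_pow two_ne_zero).const_mul νlo
  rw [← integral_const_mul, ← integral_const_mul, ← integral_add hv2 hg2]
  refine integral_mono_ae (hv2.add hg2) hint ?_
  filter_upwards [hc, hν] with x hcx hνx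
  gcongr

theorem sqrt_mul_cross_le_sqrt_energy_mul_sqrt_energy {c ν v w : α → ℝ} {gv gw : α → E}
    {clo νlo : ℝ} (hclo : 0 ≤ clo) (hνlo : 0 ≤ νlo)
    (hc : ∀ᵐ x ∂μ, clo ≤ c x) (hν : ∀ᵐ x ∂μ, νlo ≤ ν x)
    (hv : MemLp v 2 μ) (hw : MemLp w 2 μ) (hgv : MemLp gv 2 μ) (hgw : MemLp gw 2 μ)
    (hintv : Integrable (fun x => c x * v x ^ 2 + ν x * ‖gv x‖ ^ 2) μ)
    (hintw : Integrable (fun x => c x * w x ^ 2 + ν x * ‖gw x‖ ^ 2) μ) :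
    √(clo * νlo) * (√(∫ x, ‖gv x‖ ^ 2 ∂μ) * √(∫ x, w x ^ 2 ∂μ)
        + √(∫ x, v x ^ 2 ∂μ) * √(∫ x, ‖gw x‖ ^ 2 ∂μ))
      ≤ √(∫ x, (c x * v x ^ 2 + ν x * ‖gv x‖ ^ 2) ∂μ)
        * √(∫ x, (c x * w x ^ 2 + ν x * ‖gw x‖ ^ 2) ∂μ) := by
  have hsq {f : α → ℝ} (hf : 0 ≤ f) : √(∫ x, f x ∂μ) ^ 2 = ∫ x, f x ∂μ :=
    Real.sq_sqrt (integral_nonneg hf)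
  calc _ ≤ √(clo * √(∫ x, v x ^ 2 ∂μ) ^ 2 + νlo * √(∫ x, ‖gv x‖ ^ 2 ∂μ) ^ 2)
          * √(clo * √(∫ x, w x ^ 2 ∂μ) ^ 2 + νlo * √(∫ x, ‖gw x‖ ^ 2 ∂μ) ^ 2) :=
        sqrt_mul_mul_add_mul_le _ _ _ _ _ _ hclo hνlo
    _ ≤ _ := by
        simp only [hsq fun x => sq_nonneg _]
        gcongr
        · exact mul_integral_sq_add_mul_integral_sq_le hc hν hv hgv hintv
        · exact mul_integral_sq_add_mul_integral_sq_le hc hν hw hgw hintw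

variable [InnerProductSpace ℝ E]

theorem abs_integral_mul_inner_gradient_sub_le {ν v w : α → ℝ} {gv gw gχ : α → E} {νhi L : ℝ}
    (hνhi : 0 ≤ νhi) (hL : 0 ≤ L) (hν : ∀ᵐ x ∂μ, |ν x| ≤ νhi) (hgχ : ∀ᵐ x ∂μ, ‖gχ x‖ ≤ L)
    (hv : MemLp v 2 μ) (hw : MemLp w 2 μ) (hgv : MemLp gv 2 μ) (hgw : MemLp gw 2 μ) :
    |∫ x, ν x * (w x * ⟪gv x, gχ x⟫ - v x * ⟪gw x, gχ x⟫) ∂μ|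
      ≤ νhi * L * (√(∫ x, ‖gv x‖ ^ 2 ∂μ) * √(∫ x, w x ^ 2 ∂μ)
        + √(∫ x, v x ^ 2 ∂μ) * √(∫ x, ‖gw x‖ ^ 2 ∂μ)) := by
  have hgvw : Integrable (fun x => ‖gv x‖ * ‖w x‖) μ := hgv.norm.integrable_mul hw.norm
  have hvgw : Integrable (fun x => ‖v x‖ * ‖gw x‖) μ := hv.norm.integrable_mul hgw.norm
  have hsq (f : α → ℝ) : ∫ x, ‖f x‖ ^ 2 ∂μ = ∫ x, f x ^ 2 ∂μ := by
    simp only [Real.norm_eq_abs, sq_abs]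
  calc _ ≤ ∫ x, νhi * L * (‖gv x‖ * ‖w x‖ + ‖v x‖ * ‖gw x‖) ∂μ := by
        rw [← Real.norm_eq_abs]
        refine norm_integral_le_of_norm_le ((hgvw.add hvgw).const_mul _) ?_
        filter_upwards [hν, hgχ] with x hνx hgχx
        rw [norm_mul, Real.norm_eq_abs, Real.norm_eq_abs, mul_assoc]
        exact mul_le_mul hνx (abs_mul_inner_sub_mul_inner_le _ _ _ _ _ hgχx) (abs_nonneg _) hνhi
    _ = νhi * L * (∫ x, ‖gv x‖ * ‖w x‖ ∂μ + ∫ x, ‖v x‖ * ‖gw x‖ ∂μ) := by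
        rw [integral_const_mul, integral_add hgvw hvgw]
    _ ≤ _ := by
        gcongr
        · simpa only [hsq] using integral_norm_mul_norm_le_sqrt_mul_sqrt hgv hw
        · simpa only [hsq] using integral_norm_mul_norm_le_sqrt_mul_sqrt hv hgw

end Energy

theorem stmt12_general (d : ℕ)
    (Ω : Set (EuclideanSpace ℝ (Fin d)))
    (ct ν : EuclideanSpace ℝ (Fin d) → ℝ) (hctm : Measurable ct) (hνm : Measurable ν)
    (ctlo cthi νlo νhi : ℝ)
    (hctlo : 0 < ctlo) (hνlo : 0 < νlo) (hν : νlo ≤ νhi)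
    (hctbd : ∀ᵐ x ∂(volume.restrict Ω), ctlo ≤ ct x ∧ ct x ≤ cthi)
    (hνbd : ∀ᵐ x ∂(volume.restrict Ω), νlo ≤ ν x ∧ ν x ≤ νhi)
    -- the subdomain
    (Ωj : Set (EuclideanSpace ℝ (Fin d))) (hΩj : IsOpen Ωj) (hΩjsub : Ωj ⊆ Ω)
    -- the partition of unity function
    (δ CdPU : ℝ) (hδ : 0 < δ) (hCdPU : 0 < CdPU)
    (χ : EuclideanSpace ℝ (Fin d) → ℝ) (hχ : Differentiable ℝ χ)
    (hχgrad : ∀ x ∈ Ωj, ‖gradient χ x‖ ≤ CdPU / δ)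
    -- the functions
    (v w : EuclideanSpace ℝ (Fin d) → ℝ)
    (hv : Differentiable ℝ v) (hw : Differentiable ℝ w)
    (hvL2 : MemLp v 2 (volume.restrict Ωj)) (hwL2 : MemLp w 2 (volume.restrict Ωj))
    (hgvL2 : MemLp (gradient v) 2 (volume.restrict Ωj))
    (hgwL2 : MemLp (gradient w) 2 (volume.restrict Ωj))
    -- integrability of the relevant products
    (hint1 : IntegrableOn (fun x =>
      ct x * v x * (χ x * w x) + ν x * ⟪gradient v x, gradient (fun y => χ y * w y) x⟫) Ωj)
    (hint2 : IntegrableOn (fun x =>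
      ct x * (χ x * v x) * w x + ν x * ⟪gradient (fun y => χ y * v y) x, gradient w x⟫) Ωj) :
    |(∫ x in Ωj,
        (ct x * v x * (χ x * w x)
          + ν x * ⟪gradient v x, gradient (fun y => χ y * w y) x⟫))
      - ∫ x in Ωj,
        (ct x * (χ x * v x) * w x
          + ν x * ⟪gradient (fun y => χ y * v y) x, gradient w x⟫)|
      ≤ CdPU * (νhi / Real.sqrt (ctlo * νlo)) * (1 / δ)
          * Real.sqrt (∫ x in Ωj, (ct x * v x ^ 2 + ν x * ‖gradient v x‖ ^ 2))
          * Real.sqrt (∫ x in Ωj, (ct x * w x ^ 2 + ν x * ‖gradient w x‖ ^ 2)) := by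
  have hctj := ae_restrict_of_ae_restrict_of_subset hΩjsub hctbd
  have hνj := ae_restrict_of_ae_restrict_of_subset hΩjsub hνbd
  have hctabs : ∀ᵐ x ∂volume.restrict Ωj, |ct x| ≤ cthi :=
    hctj.mono fun x hx => abs_le.2 ⟨by linarith [hx.1], hx.2⟩
  have hνabs : ∀ᵐ x ∂volume.restrict Ωj, |ν x| ≤ νhi :=
    hνj.mono fun x hx => abs_le.2 ⟨by linarith [hx.1], hx.2⟩
  have hgχ : ∀ᵐ x ∂volume.restrict Ωj, ‖gradient χ x‖ ≤ CdPU / δ :=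
    (ae_restrict_mem hΩj.measurableSet).mono hχgrad
  have hcommutator : (∫ x in Ωj, (ct x * v x * (χ x * w x)
        + ν x * ⟪gradient v x, gradient (fun y => χ y * w y) x⟫))
      - ∫ x in Ωj, (ct x * (χ x * v x) * w x
        + ν x * ⟪gradient (fun y => χ y * v y) x, gradient w x⟫)
      = ∫ x in Ωj, ν x * (w x * ⟪gradient v x, gradient χ x⟫
        - v x * ⟪gradient w x, gradient χ x⟫) := by
    rw [← integral_sub hint1 hint2]
    congr 1 with x
    linear_combination ν x * inner_gradient_mul_sub_inner_gradient_mul (hχ x) (hv x) (hw x)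
  have hνhi : 0 ≤ νhi := hνlo.le.trans hν
  have hbound := abs_integral_mul_inner_gradient_sub_le hνhi (by positivity)
    hνabs hgχ hvL2 hwL2 hgvL2 hgwL2
  have henergy := sqrt_mul_cross_le_sqrt_energy_mul_sqrt_energy hctlo.le hνlo.le
    (hctj.mono fun _ hx => hx.1) (hνj.mono fun _ hx => hx.1) hvL2 hwL2 hgvL2 hgwL2
    (integrable_weighted_energy hctm.aestronglyMeasurable hνm.aestronglyMeasurable
      hctabs hνabs hvL2 hgvL2)
    (integrable_weighted_energy hctm.aestronglyMeasurable hνm.aestronglyMeasurable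
      hctabs hνabs hwL2 hgwL2)
  rw [hcommutator]
  refine hbound.trans ?_
  rw [← le_div_iff₀' (by positivity)] at henergy
  calc _ ≤ νhi * (CdPU / δ) * (_ / √(ctlo * νlo)) := by gcongr
    _ = _ := by field_simp

/-- commutator bound for the weighted inner product,
`|(v, χw)_{1,c,Ω_j} − (χv, w)_{1,c,Ω_j}| ≤ C_dPU (ν₊/√(c̃₋ν₋)) (1/δ) ‖v‖‖w‖`. -/
theorem stmt12 (d : ℕ) (hd : 1 ≤ d)
    (Ω : Set (EuclideanSpace ℝ (Fin d))) (hΩo : IsOpen Ω) (hΩb : Bornology.IsBounded Ω)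
    (ct ν : EuclideanSpace ℝ (Fin d) → ℝ) (hctm : Measurable ct) (hνm : Measurable ν)
    (ctlo cthi νlo νhi : ℝ)
    (hctlo : 0 < ctlo) (hct : ctlo ≤ cthi) (hνlo : 0 < νlo) (hν : νlo ≤ νhi)
    (hctbd : ∀ᵐ x ∂(volume.restrict Ω), ctlo ≤ ct x ∧ ct x ≤ cthi)
    (hνbd : ∀ᵐ x ∂(volume.restrict Ω), νlo ≤ ν x ∧ ν x ≤ νhi)
    -- the subdomain
    (Ωj : Set (EuclideanSpace ℝ (Fin d))) (hΩj : IsOpen Ωj) (hΩjsub : Ωj ⊆ Ω)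
    -- the partition of unity function
    (δ CdPU : ℝ) (hδ : 0 < δ) (hCdPU : 0 < CdPU)
    (χ : EuclideanSpace ℝ (Fin d) → ℝ) (hχ : Differentiable ℝ χ)
    (hχbd : ∀ x ∈ Ωj, |χ x| ≤ 1)
    (hχgrad : ∀ x ∈ Ωj, ‖gradient χ x‖ ≤ CdPU / δ)
    -- the functions
    (v w : EuclideanSpace ℝ (Fin d) → ℝ)
    (hv : Differentiable ℝ v) (hw : Differentiable ℝ w)
    (hvL2 : MemLp v 2 (volume.restrict Ωj)) (hwL2 : MemLp w 2 (volume.restrict Ωj))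
    (hgvL2 : MemLp (gradient v) 2 (volume.restrict Ωj))
    (hgwL2 : MemLp (gradient w) 2 (volume.restrict Ωj))
    (hχvL2 : MemLp (fun x => χ x * v x) 2 (volume.restrict Ωj))
    (hgχvL2 : MemLp (gradient fun x => χ x * v x) 2 (volume.restrict Ωj))
    (hχwL2 : MemLp (fun x => χ x * w x) 2 (volume.restrict Ωj))
    (hgχwL2 : MemLp (gradient fun x => χ x * w x) 2 (volume.restrict Ωj))
    -- integrability of the relevant products
    (hint1 : IntegrableOn (fun x =>
      ct x * v x * (χ x * w x) + ν x * ⟪gradient v x, gradient (fun y => χ y * w y) x⟫) Ωj)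
    (hint2 : IntegrableOn (fun x =>
      ct x * (χ x * v x) * w x + ν x * ⟪gradient (fun y => χ y * v y) x, gradient w x⟫) Ωj) :
    |(∫ x in Ωj,
        (ct x * v x * (χ x * w x)
          + ν x * ⟪gradient v x, gradient (fun y => χ y * w y) x⟫))
      - ∫ x in Ωj,
        (ct x * (χ x * v x) * w x
          + ν x * ⟪gradient (fun y => χ y * v y) x, gradient w x⟫)|
      ≤ CdPU * (νhi / Real.sqrt (ctlo * νlo)) * (1 / δ)
          * Real.sqrt (∫ x in Ωj, (ct x * v x ^ 2 + ν x * ‖gradient v x‖ ^ 2))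
          * Real.sqrt (∫ x in Ωj, (ct x * w x ^ 2 + ν x * ‖gradient w x‖ ^ 2)) :=
  stmt12_general d Ω ct ν hctm hνm ctlo cthi νlo νhi hctlo hνlo hν hctbd hνbd Ωj hΩj hΩjsub δ CdPU
    hδ hCdPU χ hχ hχgrad v w hv hw hvL2 hwL2 hgvL2 hgwL2 hint1 hint2
end
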